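/- The gradient of the log-posterior of the initial state is zero: for any observation-action sequence y with P_θ(y) > 0 and P_θ(s_0 | y) > 0, ∇_θ log P_θ(s_0 | y) = 0, and consequently ∇_θ P_θ(s_0 | y) = 0. That is, the posterior over the initial state given the full observation-action history does not depend on the policy parameters. -/

import Mathlib

open BigOperators Finset Matrix

/-- A hidden Markov model with controllable emissions. `step s s'` is the probability
of transitioning from state `s` to state `s'`, `emit s a o` is the probability of
emitting observation `o` in state `s` under perception action `a`, and `init` is the
distribution of the initial state `S₀`. -/
structure CHMM (S O A : Type*) [Fintype S] [Fintype O] [Fintype A] where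
  step : S → S → ℝ
  emit : S → A → O → ℝ
  init : S → ℝ
  step_nonneg : ∀ s s', 0 ≤ step s s'
  step_sum : ∀ s, ∑ s', step s s' = 1
  emit_nonneg : ∀ s a o, 0 ≤ emit s a o
  emit_sum : ∀ s a, ∑ o, emit s a o = 1
  init_nonneg : ∀ s, 0 ≤ init s
  init_sum : ∑ s, init s = 1

variable {S O A : Type*} [Fintype S] [Fintype O] [Fintype A]

/-- The weight of a state path `s₀ … s_{t+1}`: at each time `i ≤ t` the state `sᵢ`
emits `oᵢ` under action `aᵢ` and then transitions to `s_{i+1}`. -/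
noncomputable def pathWeight (M : CHMM S O A) (t : ℕ) (o : Fin (t+1) → O)
    (a : Fin (t+1) → A) (s : Fin (t+2) → S) : ℝ :=
  ∏ i : Fin (t+1), (M.emit (s i.castSucc) (a i) (o i) * M.step (s i.castSucc) (s i.succ))

/-- `P(o_{0:t} | a_{0:t})` when the initial state is drawn from `μ`. -/
noncomputable def obsProbFrom (M : CHMM S O A) (μ : S → ℝ) (t : ℕ)
    (o : Fin (t+1) → O) (a : Fin (t+1) → A) : ℝ :=
  ∑ s : Fin (t+2) → S, μ (s 0) * pathWeight M t o a s

/-- `P(o_{0:t} | a_{0:t})`, the action-conditioned observation-sequence probability. -/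
noncomputable def obsProb (M : CHMM S O A) (t : ℕ)
    (o : Fin (t+1) → O) (a : Fin (t+1) → A) : ℝ :=
  obsProbFrom M M.init t o a

/-- Joint probability `P_π(o_{0:t}, a_{0:t})` of the observation-action sequence in the
process induced by an observation-based policy `π` (mapping observation histories to
action probabilities), when the initial state is drawn from `μ`. -/
noncomputable def jointProbFrom (M : CHMM S O A) (μ : S → ℝ) (π : List O → A → ℝ)
    (t : ℕ) (o : Fin (t+1) → O) (a : Fin (t+1) → A) : ℝ :=
  ∑ s : Fin (t+2) → S, μ (s 0) *
    ∏ i : Fin (t+1), (π ((List.ofFn o).take i) (a i) *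
      M.emit (s i.castSucc) (a i) (o i) * M.step (s i.castSucc) (s i.succ))

/-- Joint probability `P_π(o_{0:t}, a_{0:t})` in the induced process. -/
noncomputable def jointProb (M : CHMM S O A) (π : List O → A → ℝ)
    (t : ℕ) (o : Fin (t+1) → O) (a : Fin (t+1) → A) : ℝ :=
  jointProbFrom M M.init π t o a

/-- The observable operator `A_{o|a}`, with `(i,j)` entry `T_{i,j} · E(o | j, a)` where
`T_{i,j} = P(X_{t+1} = i | X_t = j)`. -/
noncomputable def obsOp (M : CHMM S O A) (o : O) (a : A) : Matrix S S ℝ :=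
  fun i j => M.step j i * M.emit j a o

/-- The product `A_{o_t|a_t} ⋯ A_{o_0|a_0}` of observable operators. -/
noncomputable def obsOpProd [DecidableEq S] (M : CHMM S O A) (t : ℕ)
    (o : Fin (t+1) → O) (a : Fin (t+1) → A) : Matrix S S ℝ :=
  (List.ofFn (fun i : Fin (t+1) => obsOp M (o i) (a i))).reverse.prod


variable [DecidableEq S]

/-- The posterior probability `P_θ(s₀ | y)` of the initial state `s₀` given the
observation-action sequence `y = (o_{0:T}, a_{0:T})`, obtained by Bayes' rule:
`P_θ(s₀|y) = P_θ(y|s₀) μ₀(s₀) / P_θ(y)`. -/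
noncomputable def posterior {d : ℕ} (M : CHMM S O A)
    (π : EuclideanSpace ℝ (Fin d) → List O → A → ℝ) (T : ℕ)
    (o : Fin (T+1) → O) (a : Fin (T+1) → A) (θ : EuclideanSpace ℝ (Fin d)) (s₀ : S) : ℝ :=
  M.init s₀ * jointProbFrom M (Pi.single s₀ 1) (π θ) T o a / jointProb M (π θ) T o a

omit [DecidableEq S] in
lemma jointProbFrom_eq_prod_mul_obsProbFrom (M : CHMM S O A) (μ : S → ℝ)
    (π : List O → A → ℝ) (t : ℕ) (o : Fin (t+1) → O) (a : Fin (t+1) → A) :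
    jointProbFrom M μ π t o a =
      (∏ i : Fin (t+1), π ((List.ofFn o).take i) (a i)) * obsProbFrom M μ t o a := by
  simp only [jointProbFrom, obsProbFrom, pathWeight, Finset.mul_sum, mul_assoc,
    Finset.prod_mul_distrib, mul_left_comm]

/-- Bayes' rule with the policy factor `∏ᵢ π(aᵢ | o_{<i})`, common to numerator and
denominator, cancelled. -/
lemma posterior_eq_div_obsProb {d : ℕ} (M : CHMM S O A)
    (π : EuclideanSpace ℝ (Fin d) → List O → A → ℝ) (T : ℕ)
    (o : Fin (T+1) → O) (a : Fin (T+1) → A) (θ : EuclideanSpace ℝ (Fin d)) (s₀ : S)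
    (hπ : ∀ h a', π θ h a' ≠ 0) :
    posterior M π T o a θ s₀ =
      M.init s₀ * obsProbFrom M (Pi.single s₀ 1) T o a / obsProb M T o a := by
  have hprod : ∏ i : Fin (T+1), π θ ((List.ofFn o).take i) (a i) ≠ 0 :=
    Finset.prod_ne_zero_iff.mpr fun i _ => hπ _ _
  rw [posterior, jointProb, obsProb, jointProbFrom_eq_prod_mul_obsProbFrom,
    jointProbFrom_eq_prod_mul_obsProbFrom, mul_left_comm, mul_div_mul_left _ _ hprod]

theorem grad_log_posterior_eq_zero_general {d : ℕ} (M : CHMM S O A)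
    (π : EuclideanSpace ℝ (Fin d) → List O → A → ℝ)
    (hpos : ∀ θ h a', 0 < π θ h a')
    (T : ℕ) (o : Fin (T+1) → O) (a : Fin (T+1) → A) (s₀ : S)
    (θ₀ : EuclideanSpace ℝ (Fin d)) :
    fderiv ℝ (fun θ => Real.log (posterior M π T o a θ s₀)) θ₀ = 0 ∧
      fderiv ℝ (fun θ => posterior M π T o a θ s₀) θ₀ = 0 := by
  have hconst : (fun θ => posterior M π T o a θ s₀) =
      fun _ => M.init s₀ * obsProbFrom M (Pi.single s₀ 1) T o a / obsProb M T o a :=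
    funext fun θ => posterior_eq_div_obsProb M π T o a θ s₀ fun h a' => (hpos θ h a').ne'
  have hlog_const : (fun θ => Real.log (posterior M π T o a θ s₀)) =
      fun _ => Real.log (M.init s₀ * obsProbFrom M (Pi.single s₀ 1) T o a / obsProb M T o a) :=
    congrArg (Real.log ∘ ·) hconst
  rw [hlog_const, hconst]
  exact ⟨fderiv_const_apply _, fderiv_const_apply _⟩

/-- Proposition 5: the gradient of the log-posterior of the initial
state is zero: for any observation-action sequence `y` with `P_θ(y) > 0` and
`P_θ(s₀ | y) > 0`, `∇_θ log P_θ(s₀ | y) = 0`, and consequently `∇_θ P_θ(s₀ | y) = 0` —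
the posterior over the initial state does not depend on the policy parameters. -/
theorem grad_log_posterior_eq_zero {d : ℕ} (M : CHMM S O A)
    (π : EuclideanSpace ℝ (Fin d) → List O → A → ℝ)
    (hdiff : ∀ h a', Differentiable ℝ (fun θ => π θ h a'))
    (hpos : ∀ θ h a', 0 < π θ h a')
    (T : ℕ) (o : Fin (T+1) → O) (a : Fin (T+1) → A) (s₀ : S)
    (θ₀ : EuclideanSpace ℝ (Fin d))
    (h1 : 0 < jointProb M (π θ₀) T o a)
    (h2 : 0 < posterior M π T o a θ₀ s₀) :
    fderiv ℝ (fun θ => Real.log (posterior M π T o a θ s₀)) θ₀ = 0 ∧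
      fderiv ℝ (fun θ => posterior M π T o a θ s₀) θ₀ = 0 :=
  grad_log_posterior_eq_zero_general M π hpos T o a s₀ θ₀
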